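/- arXiv:2510.13340 — 5 statements merged into one kernel-verified Lean document; each statement's English description precedes it below -/
import Mathlib

section
/- Let c ∈ ℝ and φ ∈ X_{M,m} with M > |c| and m ≥ 2. Then M⁻¹_c[φ](x) = (1/(2π)) x^{−c} F[z ↦ φ(c+iz)](log x) for all x > 0, where F[f](ξ) = ∫_{−∞}^∞ e^{−ixξ} f(x) dx. Moreover, for every M′ ∈ (0,M) there exists C > 0 such that |M⁻¹_c[φ](x)| ≤ C x^{M′ − 2|c|} for all x ∈ (0,1] and |M⁻¹_c[φ](x)| ≤ C x^{−M′ + 2|c|} for all x ∈ [1,∞). In addition, for every k ∈ ℕ with k + 2 ≤ m and every M′ ∈ (0,M) there exists C > 0 such that the k-th derivative satisfies |(M⁻¹_c[φ])^{(k)}(x)| ≤ C x^{M′ − k − 2|c|} for all x ∈ (0,1] and |(M⁻¹_c[φ])^{(k)}(x)| ≤ C x^{−M′ − k + 2|c|} for all x ∈ [1,∞). -/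
/-!
STATEMENT 6: properties of the c-inverse Mellin transform of φ ∈ X_{M,m}
(Fourier representation, and decay of the transform and of its derivatives).
-/

open MeasureTheory

/-- membership in `X_{M,m}` : holomorphic on the strip `S_M = {|Re z| < M}` with decay
`|φ(z)| ≤ C (1+|z|)^{-m}` there. -/
def memX (M m : ℝ) (φ : ℂ → ℂ) : Prop :=
  DifferentiableOn ℂ φ {z : ℂ | |z.re| < M} ∧
  ∃ C > 0, ∀ z : ℂ, |z.re| < M → ‖φ z‖ ≤ C * (1 + ‖z‖) ^ (-m)

/-- the `c`-inverse Mellin transform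
`M⁻¹_c[φ](x) = (1/(2π)) ∫_ℝ x^{−c−iz} φ(c+iz) dz`. -/
noncomputable def mellinInvC (c : ℝ) (φ : ℂ → ℂ) (x : ℝ) : ℂ :=
  (1 / (2 * (Real.pi : ℂ))) *
    ∫ z : ℝ, (x : ℂ) ^ (-(c : ℂ) - Complex.I * z) * φ (c + Complex.I * z)

/-- the Fourier transform `F[f](ξ) = ∫_ℝ e^{−ixξ} f(x) dx`. -/
noncomputable def fourierT (f : ℝ → ℂ) (ξ : ℝ) : ℂ :=
  ∫ x : ℝ, Complex.exp (-Complex.I * x * ξ) * f x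

open Complex Set Filter Topology
open scoped Interval Real

/-!
Write `s = c + iy`. The integrand is `x^{-s} φ(s)`, and `x^{-c-iy} = x^{-c} e^{-iy log x}` gives
the Fourier form. Since `s ↦ x^{-s} φ(s)` is holomorphic on the strip and decays like
`(1 + |Im s|)^{-m}`, Cauchy's theorem on rectangles moves the line of integration to any
`Re s = σ` with `|σ| < M`, where the integral is `O(x^{-σ})`; taking `σ = |c| - M'` for `x ≤ 1`
and `σ = M' - |c|` for `x ≥ 1` gives the decay. Differentiating `k` times under the integral
gives `x^{-k} M⁻¹_c[ψ_k](x)` with `ψ_k(s) = (-s)(-s-1)⋯(-s-k+1) φ(s)`, and `ψ_k ∈ X_{M,m-k}`,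
so the same bound applies.
-/

section ContourShift

variable {E : Type*} [NormedAddCommGroup E] [NormedSpace ℂ E]

theorem tendsto_intervalIntegral_horizontal_of_norm_le {l : Filter ℝ} {f : ℂ → E} {g : ℝ → ℝ}
    {σ₁ σ₂ : ℝ} (hfg : ∀ t ∈ [[σ₁, σ₂]], ∀ y : ℝ, ‖f (t + (y : ℂ) * I)‖ ≤ g y)
    (hg : Tendsto g l (𝓝 0)) :
    Tendsto (fun y : ℝ => ∫ t in σ₁..σ₂, f (t + (y : ℂ) * I)) l (𝓝 0) := by
  refine squeeze_zero_norm (fun y => intervalIntegral.norm_integral_le_of_norm_le_const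
    fun t ht => hfg t (uIoc_subset_uIcc ht) y) ?_
  simpa using hg.mul_const |σ₂ - σ₁|

theorem integral_vertical_eq_of_differentiableOn {f : ℂ → E} {σ₁ σ₂ : ℝ}
    (hf : DifferentiableOn ℂ f ([[σ₁, σ₂]] ×ℂ univ))
    (h₁ : Integrable fun y : ℝ => f (σ₁ + (y : ℂ) * I))
    (h₂ : Integrable fun y : ℝ => f (σ₂ + (y : ℂ) * I))
    (hhor : Tendsto (fun y : ℝ => ∫ t in σ₁..σ₂, f (t + (y : ℂ) * I)) (cocompact ℝ) (𝓝 0)) :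
    ∫ y : ℝ, f (σ₁ + (y : ℂ) * I) = ∫ y : ℝ, f (σ₂ + (y : ℂ) * I) := by
  have hrect : ∀ T : ℝ, (∫ t in σ₁..σ₂, f (t + ((-T : ℝ) : ℂ) * I)) -
      (∫ t in σ₁..σ₂, f (t + (T : ℂ) * I)) + I • (∫ y in -T..T, f (σ₂ + (y : ℂ) * I)) -
      I • (∫ y in -T..T, f (σ₁ + (y : ℂ) * I)) = 0 := fun T =>
    integral_boundary_rect_eq_zero_of_differentiableOn f ⟨σ₁, -T⟩ ⟨σ₂, T⟩
      (hf.mono fun _ hz => ⟨hz.1, trivial⟩)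
  have hlim := (((hhor.comp (tendsto_neg_atTop_atBot.mono_right atBot_le_cocompact)).sub
    (hhor.comp (tendsto_id.mono_right atTop_le_cocompact))).add
    ((intervalIntegral_tendsto_integral h₂ tendsto_neg_atTop_atBot tendsto_id).const_smul I)).sub
    ((intervalIntegral_tendsto_integral h₁ tendsto_neg_atTop_atBot tendsto_id).const_smul I)
  have h0 := tendsto_nhds_unique (tendsto_const_nhds.congr fun T => (hrect T).symm) hlim
  rw [sub_self, zero_add, ← smul_sub, eq_comm, smul_eq_zero, sub_eq_zero] at h0
  exact (h0.resolve_left I_ne_zero).symm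

end ContourShift

theorem integrable_one_add_abs_rpow_neg {p : ℝ} (hp : 1 < p) :
    Integrable fun y : ℝ => (1 + |y|) ^ (-p) := by
  simpa using integrable_one_add_norm (E := ℝ) (μ := volume) (by simpa using hp)

theorem integrable_of_norm_le_one_add_abs_rpow_neg {E : Type*} [NormedAddCommGroup E]
    {g : ℝ → E} {C p : ℝ} (hg : AEStronglyMeasurable g) (hp : 1 < p)
    (hgC : ∀ y, ‖g y‖ ≤ C * (1 + |y|) ^ (-p)) : Integrable g :=
  ((integrable_one_add_abs_rpow_neg hp).const_mul C).mono' hg (Eventually.of_forall hgC)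

theorem norm_ofReal_cpow_sub_I_mul {x : ℝ} (hx : 0 < x) (w : ℂ) (y : ℝ) :
    ‖(x : ℂ) ^ (w - I * y)‖ = x ^ w.re := by
  simp [norm_cpow_eq_rpow_re_of_pos hx]

theorem MeasureTheory.Integrable.ofReal_cpow_sub_I_mul_mul {g : ℝ → ℂ} (hg : Integrable g) {x : ℝ}
    (hx : 0 < x) (w : ℂ) : Integrable fun y : ℝ => (x : ℂ) ^ (w - I * y) * g y :=
  hg.bdd_mul (by fun_prop : Measurable _).aestronglyMeasurable
    (Eventually.of_forall fun y => (norm_ofReal_cpow_sub_I_mul hx w y).le)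

theorem one_add_norm_rpow_neg_le_im {m : ℝ} (hm : 0 ≤ m) (s : ℂ) :
    (1 + ‖s‖) ^ (-m) ≤ (1 + |s.im|) ^ (-m) :=
  Real.rpow_le_rpow_of_nonpos (by positivity) (by linarith [abs_im_le_norm s]) (by linarith)

theorem mellinInvC_eq_integral_vertical (σ : ℝ) (φ : ℂ → ℂ) (x : ℝ) :
    mellinInvC σ φ x =
      1 / (2 * (π : ℂ)) * ∫ y : ℝ, (x : ℂ) ^ (-(σ + y * I)) * φ (σ + y * I) := by
  unfold mellinInvC
  ring_nf

theorem hasDerivAt_ofReal_cpow_const_of_pos {t : ℝ} (ht : 0 < t) (w : ℂ) :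
    HasDerivAt (fun u : ℝ => (u : ℂ) ^ w) (w * (t : ℂ) ^ (w - 1)) t :=
  (hasStrictDerivAt_cpow_const (ofReal_mem_slitPlane.2 ht)).hasDerivAt.comp_ofReal

-- The weight `1 + |y|` dominates the factor `w - I * y` produced by differentiating in `t`.
theorem hasDerivAt_integral_ofReal_cpow_sub_I_mul_mul {g : ℝ → ℂ} (hg : AEStronglyMeasurable g)
    (hgi : Integrable fun y => (1 + |y|) * ‖g y‖) (w : ℂ) {x : ℝ} (hx : 0 < x) :
    HasDerivAt (fun t : ℝ => ∫ y : ℝ, (t : ℂ) ^ (w - I * y) * g y)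
      (∫ y : ℝ, (w - I * y) * (x : ℂ) ^ (w - I * y - 1) * g y) x := by
  have hball : ∀ t ∈ Metric.closedBall x (x / 2), 0 < t := fun t ht => by
    rw [Metric.mem_closedBall, Real.dist_eq, abs_le] at ht
    linarith
  obtain ⟨K, hK⟩ := (isCompact_closedBall x (x / 2)).exists_bound_of_continuousOn
    (f := fun t : ℝ => t ^ (w.re - 1))
    (continuousOn_id.rpow_const fun t ht => .inl (hball t ht).ne')
  have hgint : Integrable g :=
    hgi.mono' hg (Eventually.of_forall fun y => by
      nlinarith [abs_nonneg y, norm_nonneg (g y)])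
  refine (hasDerivAt_integral_of_dominated_loc_of_deriv_le (Metric.ball_mem_nhds x (half_pos hx))
    (F' := fun t y => (w - I * y) * (t : ℂ) ^ (w - I * y - 1) * g y)
    (bound := fun y => (‖w‖ + 1) * K * ((1 + |y|) * ‖g y‖))
    (Eventually.of_forall fun t =>
      (by fun_prop : Measurable fun y : ℝ => (t : ℂ) ^ (w - I * y)).aestronglyMeasurable.mul hg)
    (hgint.ofReal_cpow_sub_I_mul_mul hx w)
    ((by fun_prop : Measurable fun y : ℝ => (w - I * y) * (x : ℂ) ^ (w - I * y - 1)
      ).aestronglyMeasurable.mul hg) ?_ (hgi.const_mul _) ?_).2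
  · refine Eventually.of_forall fun y t ht => ?_
    have ht0 := hball t (Metric.ball_subset_closedBall ht)
    have hw : ‖w - I * y‖ ≤ (‖w‖ + 1) * (1 + |y|) := by
      refine (norm_sub_le _ _).trans ?_
      simp only [norm_mul, norm_I, one_mul, norm_real, Real.norm_eq_abs]
      nlinarith [abs_nonneg y, norm_nonneg w]
    have hpow : ‖(t : ℂ) ^ (w - I * y - 1)‖ ≤ K := by
      simpa [norm_cpow_eq_rpow_re_of_pos ht0,
        Real.norm_of_nonneg (Real.rpow_nonneg ht0.le _)] using
        hK t (Metric.ball_subset_closedBall ht)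
    rw [norm_mul, norm_mul]
    calc ‖w - I * y‖ * ‖(t : ℂ) ^ (w - I * y - 1)‖ * ‖g y‖
        ≤ (‖w‖ + 1) * (1 + |y|) * K * ‖g y‖ := by gcongr
      _ = (‖w‖ + 1) * K * ((1 + |y|) * ‖g y‖) := by ring
  · exact Eventually.of_forall fun y t ht =>
      (hasDerivAt_ofReal_cpow_const_of_pos (hball t (Metric.ball_subset_closedBall ht)) _
        ).mul_const (g y)

theorem cpow_neg_mul_mellinInvC (a : ℂ) (c : ℝ) (φ : ℂ → ℂ) {t : ℝ} (ht : 0 < t) :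
    (t : ℂ) ^ (-a) * mellinInvC c φ t =
      1 / (2 * (π : ℂ)) * ∫ y : ℝ, (t : ℂ) ^ ((-a - c) - I * y) * φ (c + I * y) := by
  rw [mellinInvC, mul_left_comm, ← integral_const_mul]
  refine congrArg _ (integral_congr_ae (.of_forall fun y => ?_))
  beta_reduce
  rw [← mul_assoc, ← cpow_add _ _ (ofReal_ne_zero.2 ht.ne')]
  ring_nf

theorem norm_ofReal_cpow_neg_natCast_mul_le {x C e : ℝ} (hx : 0 < x) (k : ℕ) {z : ℂ}
    (hz : ‖z‖ ≤ C * x ^ e) : ‖(x : ℂ) ^ (-(k : ℂ)) * z‖ ≤ C * x ^ (e - k) := by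
  rw [norm_mul, norm_cpow_eq_rpow_re_of_pos hx]
  calc x ^ (-(k : ℂ)).re * ‖z‖ ≤ x ^ (-(k : ℝ)) * (C * x ^ e) := by simpa using by gcongr
    _ = C * x ^ (e - k) := by rw [sub_eq_add_neg, Real.rpow_add hx]; ring

theorem mellinInvC_eq_fourierT (c : ℝ) (φ : ℂ → ℂ) {x : ℝ} (hx : 0 < x) :
    mellinInvC c φ x = 1 / (2 * (π : ℂ)) * (x : ℂ) ^ (-(c : ℂ)) *
      fourierT (fun z => φ (c + I * z)) (Real.log x) := by
  have hx' : (x : ℂ) ≠ 0 := ofReal_ne_zero.2 hx.ne'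
  rw [mellinInvC, fourierT, mul_assoc, ← integral_const_mul ((x : ℂ) ^ (-(c : ℂ)))]
  refine congrArg _ (integral_congr_ae (.of_forall fun z => ?_))
  beta_reduce
  rw [cpow_def_of_ne_zero hx', cpow_def_of_ne_zero hx', ← ofReal_log hx.le, ← mul_assoc,
    ← exp_add]
  ring_nf

namespace memX

variable {M m : ℝ} {φ : ℂ → ℂ}

theorem exists_norm_le_im (hφ : memX M m φ) (hm : 0 ≤ m) :
    ∃ C, ∀ s : ℂ, |s.re| < M → ‖φ s‖ ≤ C * (1 + |s.im|) ^ (-m) := by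
  obtain ⟨-, C, hC, hφC⟩ := hφ
  exact ⟨C, fun s hs => (hφC s hs).trans
    (mul_le_mul_of_nonneg_left (one_add_norm_rpow_neg_le_im hm s) hC.le)⟩

theorem continuous_line (hφ : memX M m φ) {σ : ℝ} (hσ : |σ| < M) :
    Continuous fun y : ℝ => φ (σ + I * y) :=
  hφ.1.continuousOn.comp_continuous (by fun_prop) fun y => by simpa using hσ

theorem integrable_line (hφ : memX M m φ) (hm : 1 < m) {σ : ℝ} (hσ : |σ| < M) :
    Integrable fun y : ℝ => φ (σ + I * y) := by
  obtain ⟨C, hC⟩ := hφ.exists_norm_le_im (by linarith)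
  exact integrable_of_norm_le_one_add_abs_rpow_neg (hφ.continuous_line hσ).aestronglyMeasurable
    hm fun y => by simpa using hC (σ + I * y) (by simpa using hσ)

theorem mellinInvC_eq_of_abs_lt (hφ : memX M m φ) (hm : 1 < m) {σ₁ σ₂ x : ℝ}
    (h₁ : |σ₁| < M) (h₂ : |σ₂| < M) (hx : 0 < x) : mellinInvC σ₁ φ x = mellinInvC σ₂ φ x := by
  have hband : ∀ t ∈ [[σ₁, σ₂]], |t| < M := fun t ht =>
    abs_lt.2 <| ordConnected_Ioo.uIcc_subset (abs_lt.1 h₁) (abs_lt.1 h₂) ht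
  have hstrip : [[σ₁, σ₂]] ×ℂ univ ⊆ {s : ℂ | |s.re| < M} := fun s hs => hband s.re hs.1
  have hline : ∀ σ : ℝ, |σ| < M →
      Integrable fun y : ℝ => (x : ℂ) ^ (-(σ + y * I)) * φ (σ + y * I) := fun σ hσ =>
    ((hφ.integrable_line hm hσ).ofReal_cpow_sub_I_mul_mul hx (-σ)).congr
      (Eventually.of_forall fun y => by ring_nf)
  obtain ⟨B, hB⟩ := (isCompact_uIcc (a := σ₁) (b := σ₂)).exists_bound_of_continuousOn
    (f := fun t : ℝ => x ^ (-t))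
    (continuous_const.rpow continuous_neg fun _ => .inl hx.ne').continuousOn
  obtain ⟨C, hC⟩ := hφ.exists_norm_le_im (by linarith)
  have hB0 : 0 ≤ B := (norm_nonneg _).trans (hB σ₁ left_mem_uIcc)
  set f : ℂ → ℂ := fun s => (x : ℂ) ^ (-s) * φ s
  have hhor : ∀ t ∈ [[σ₁, σ₂]], ∀ y : ℝ, ‖f (t + y * I)‖ ≤
      B * (C * (1 + |y|) ^ (-m)) := fun t ht y => by
    rw [norm_mul, norm_cpow_eq_rpow_re_of_pos hx]
    refine mul_le_mul ?_ ?_ (norm_nonneg _) hB0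
    · simpa [Real.norm_of_nonneg (Real.rpow_nonneg hx.le _)] using hB t ht
    · simpa using hC ((t : ℂ) + y * I) (by simpa using hband t ht)
  have hdecay : Tendsto (fun y : ℝ => B * (C * (1 + |y|) ^ (-m))) (cocompact ℝ) (𝓝 0) := by
    have h := (tendsto_rpow_neg_atTop (by linarith : (0 : ℝ) < m)).comp
      (tendsto_atTop_add_const_left _ 1
        (tendsto_norm_cocompact_atTop : Tendsto (‖·‖) (cocompact ℝ) atTop))
    simpa using (h.const_mul C).const_mul B
  have hf : DifferentiableOn ℂ f ([[σ₁, σ₂]] ×ℂ univ) :=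
    (differentiable_neg.const_cpow (.inl (ofReal_ne_zero.2 hx.ne'))).differentiableOn.mul
      (hφ.1.mono hstrip)
  rw [mellinInvC_eq_integral_vertical, mellinInvC_eq_integral_vertical]
  exact congrArg _ <| integral_vertical_eq_of_differentiableOn hf (hline σ₁ h₁) (hline σ₂ h₂)
    (tendsto_intervalIntegral_horizontal_of_norm_le hhor hdecay)

theorem exists_norm_mellinInvC_le (hφ : memX M m φ) (hm : 1 < m) :
    ∃ K, ∀ σ : ℝ, |σ| < M → ∀ x : ℝ, 0 < x → ‖mellinInvC σ φ x‖ ≤ K * x ^ (-σ) := by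
  obtain ⟨C, hC⟩ := hφ.exists_norm_le_im (by linarith)
  refine ⟨(2 * π)⁻¹ * (C * ∫ y : ℝ, (1 + |y|) ^ (-m)), fun σ hσ x hx => ?_⟩
  have hint : ‖∫ y : ℝ, (x : ℂ) ^ (-(σ : ℂ) - I * y) * φ (σ + I * y)‖ ≤
      ∫ y : ℝ, x ^ (-σ) * C * (1 + |y|) ^ (-m) :=
    norm_integral_le_of_norm_le ((integrable_one_add_abs_rpow_neg hm).const_mul (x ^ (-σ) * C))
    (Eventually.of_forall fun y => by
      rw [norm_mul, norm_ofReal_cpow_sub_I_mul hx, mul_assoc]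
      refine mul_le_mul_of_nonneg_left ?_ (Real.rpow_nonneg hx.le _)
      simpa using hC (σ + I * y) (by simpa using hσ))
  rw [integral_const_mul] at hint
  have hπ : ‖1 / (2 * (π : ℂ))‖ = (2 * π)⁻¹ := by simp [abs_of_pos Real.pi_pos]
  rw [mellinInvC, norm_mul, hπ]
  exact (mul_le_mul_of_nonneg_left hint (by positivity)).trans_eq (by ring)

theorem mellinInvC_decay (hφ : memX M m φ) (hm : 1 < m) {c : ℝ} (hc : |c| < M) {M' : ℝ}
    (hM' : M' ∈ Ioo 0 M) :
    ∃ C > 0, (∀ x ∈ Ioc (0 : ℝ) 1, ‖mellinInvC c φ x‖ ≤ C * x ^ (M' - 2 * |c|)) ∧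
      (∀ x ∈ Ici (1 : ℝ), ‖mellinInvC c φ x‖ ≤ C * x ^ (-M' + 2 * |c|)) := by
  obtain ⟨K, hK⟩ := hφ.exists_norm_mellinInvC_le hm
  have hc0 := abs_nonneg c
  have hleft : |(|c| - M')| < M := abs_lt.2 ⟨by linarith [hM'.2], by linarith [hM'.1]⟩
  have hright : |(M' - |c|)| < M := abs_lt.2 ⟨by linarith [hM'.1], by linarith [hM'.2]⟩
  refine ⟨max K 1, by positivity, fun x hx => ?_, fun x hx => ?_⟩
  · have hx0 := hx.1
    rw [hφ.mellinInvC_eq_of_abs_lt hm hc hleft hx0]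
    exact (hK _ hleft x hx0).trans <| mul_le_mul (le_max_left _ _)
      (Real.rpow_le_rpow_of_exponent_ge hx0 hx.2 (by linarith)) (by positivity) (by positivity)
  · have hx0 : 0 < x := zero_lt_one.trans_le hx
    rw [hφ.mellinInvC_eq_of_abs_lt hm hc hright hx0]
    exact (hK _ hright x hx0).trans <| mul_le_mul (le_max_left _ _)
      (Real.rpow_le_rpow_of_exponent_le hx (by linarith)) (by positivity) (by positivity)

theorem neg_sub_mul (hφ : memX M m φ) (a : ℂ) : memX M (m - 1) fun s => (-s - a) * φ s := by
  obtain ⟨hd, C, hC, hφC⟩ := hφ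
  refine ⟨(differentiable_neg.sub_const a).differentiableOn.mul hd, C * (1 + ‖a‖),
    by positivity, fun s hs => ?_⟩
  have hlin : ‖-s - a‖ ≤ (1 + ‖a‖) * (1 + ‖s‖) := by
    refine (norm_sub_le _ _).trans ?_
    rw [norm_neg]
    nlinarith [norm_nonneg s, norm_nonneg a]
  rw [norm_mul, show -(m - 1) = -m + 1 by ring, Real.rpow_add_one (by positivity)]
  calc ‖-s - a‖ * ‖φ s‖ ≤ (1 + ‖a‖) * (1 + ‖s‖) * (C * (1 + ‖s‖) ^ (-m)) :=
        mul_le_mul hlin (hφC s hs) (norm_nonneg _) (by positivity)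
    _ = _ := by ring

theorem descPochhammer_mul (hφ : memX M m φ) (k : ℕ) :
    memX M (m - k) fun s => (descPochhammer ℂ k).eval (-s) * φ s := by
  induction k with
  | zero => simpa using hφ
  | succ k ih =>
    convert ih.neg_sub_mul k using 1
    · push_cast
      ring
    · funext s
      rw [descPochhammer_succ_eval]
      ring

theorem integrable_one_add_abs_mul_norm_line (hφ : memX M m φ) (hm : 2 < m) {σ : ℝ}
    (hσ : |σ| < M) : Integrable fun y : ℝ => (1 + |y|) * ‖φ (σ + I * y)‖ := by
  obtain ⟨C, hC⟩ := hφ.exists_norm_le_im (by linarith)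
  refine integrable_of_norm_le_one_add_abs_rpow_neg (C := C)
    ((continuous_const.add continuous_abs).mul (hφ.continuous_line hσ).norm).aestronglyMeasurable
    (by linarith : 1 < m - 1) fun y => ?_
  have hy : ‖φ (σ + I * y)‖ ≤ C * (1 + |y|) ^ (-m) := by
    simpa using hC (σ + I * y) (by simpa using hσ)
  rw [Real.norm_of_nonneg (by positivity), show -(m - 1) = -m + 1 by ring,
    Real.rpow_add_one (by positivity)]
  calc (1 + |y|) * ‖φ (σ + I * y)‖ ≤ (1 + |y|) * (C * (1 + |y|) ^ (-m)) := by gcongr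
    _ = _ := by ring

theorem hasDerivAt_cpow_neg_mul_mellinInvC (hφ : memX M m φ) (hm : 2 < m) {c : ℝ}
    (hc : |c| < M) (a : ℂ) {x : ℝ} (hx : 0 < x) :
    HasDerivAt (fun t : ℝ => (t : ℂ) ^ (-a) * mellinInvC c φ t)
      ((x : ℂ) ^ (-(a + 1)) * mellinInvC c (fun s => (-s - a) * φ s) x) x := by
  have hderiv := (hasDerivAt_integral_ofReal_cpow_sub_I_mul_mul
    (hφ.continuous_line hc).aestronglyMeasurable (hφ.integrable_one_add_abs_mul_norm_line hm hc)
    (-a - c) hx).const_mul (1 / (2 * (π : ℂ)))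
  refine (hderiv.congr_of_eventuallyEq ?_).congr_deriv ?_
  · filter_upwards [eventually_gt_nhds hx] with t ht using cpow_neg_mul_mellinInvC a c φ ht
  · rw [cpow_neg_mul_mellinInvC _ _ _ hx]
    congr 2 with y
    ring_nf

theorem iteratedDeriv_mellinInvC (hφ : memX M m φ) {c : ℝ} (hc : |c| < M) {k : ℕ}
    (hk : (k : ℝ) + 1 < m) {x : ℝ} (hx : 0 < x) :
    iteratedDeriv k (mellinInvC c φ) x =
      (x : ℂ) ^ (-(k : ℂ)) * mellinInvC c (fun s => (descPochhammer ℂ k).eval (-s) * φ s) x := by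
  induction k generalizing x with
  | zero => simp
  | succ k ih =>
    push_cast at hk
    have heq : iteratedDeriv k (mellinInvC c φ) =ᶠ[𝓝 x] fun t : ℝ => (t : ℂ) ^ (-(k : ℂ)) *
        mellinInvC c (fun s => (descPochhammer ℂ k).eval (-s) * φ s) t :=
      (eventually_gt_nhds hx).mono fun t ht => ih (by linarith) ht
    rw [iteratedDeriv_succ, heq.deriv_eq,
      ((hφ.descPochhammer_mul k).hasDerivAt_cpow_neg_mul_mellinInvC (by linarith) hc k hx).deriv]
    push_cast
    congr 2 with s
    rw [descPochhammer_succ_eval]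
    ring

theorem mellinInvC_iteratedDeriv_decay (hφ : memX M m φ) {c : ℝ} (hc : |c| < M) {k : ℕ}
    (hk : (k : ℝ) + 1 < m) {M' : ℝ} (hM' : M' ∈ Ioo 0 M) :
    ∃ C > 0, (∀ x ∈ Ioc (0 : ℝ) 1,
        ‖iteratedDeriv k (mellinInvC c φ) x‖ ≤ C * x ^ (M' - k - 2 * |c|)) ∧
      (∀ x ∈ Ici (1 : ℝ), ‖iteratedDeriv k (mellinInvC c φ) x‖ ≤ C * x ^ (-M' - k + 2 * |c|)) := by
  obtain ⟨C, hC, hsmall, hlarge⟩ :=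
    (hφ.descPochhammer_mul k).mellinInvC_decay (by linarith) hc hM'
  refine ⟨C, hC, fun x hx => ?_, fun x hx => ?_⟩
  · rw [hφ.iteratedDeriv_mellinInvC hc hk hx.1]
    convert norm_ofReal_cpow_neg_natCast_mul_le hx.1 k (hsmall x hx) using 3
    ring
  · have hx0 : 0 < x := zero_lt_one.trans_le hx
    rw [hφ.iteratedDeriv_mellinInvC hc hk hx0]
    convert norm_ofReal_cpow_neg_natCast_mul_le hx0 k (hlarge x hx) using 3
    ring

end memX

theorem mellinInv_properties (c M m : ℝ) (φ : ℂ → ℂ)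
    (hφ : memX M m φ) (hMc : |c| < M) (hm : 2 ≤ m) :
    (∀ x : ℝ, 0 < x →
      mellinInvC c φ x = (1 / (2 * (Real.pi : ℂ))) * (x : ℂ) ^ (-(c : ℂ)) *
        fourierT (fun z => φ (c + Complex.I * z)) (Real.log x)) ∧
    (∀ M' ∈ Set.Ioo (0 : ℝ) M, ∃ C > 0,
      (∀ x ∈ Set.Ioc (0 : ℝ) 1, ‖mellinInvC c φ x‖ ≤ C * x ^ (M' - 2 * |c|)) ∧
      (∀ x ∈ Set.Ici (1 : ℝ), ‖mellinInvC c φ x‖ ≤ C * x ^ (-M' + 2 * |c|))) ∧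
    (∀ k : ℕ, (k : ℝ) + 2 ≤ m → ∀ M' ∈ Set.Ioo (0 : ℝ) M, ∃ C > 0,
      (∀ x ∈ Set.Ioc (0 : ℝ) 1,
        ‖iteratedDeriv k (mellinInvC c φ) x‖ ≤ C * x ^ (M' - k - 2 * |c|)) ∧
      (∀ x ∈ Set.Ici (1 : ℝ),
        ‖iteratedDeriv k (mellinInvC c φ) x‖ ≤ C * x ^ (-M' - k + 2 * |c|))) :=
  ⟨fun _ hx => mellinInvC_eq_fourierT c φ hx,
    fun _ hM' => hφ.mellinInvC_decay (by linarith) hMc hM',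
    fun _ hk _ hM' => hφ.mellinInvC_iteratedDeriv_decay hMc (by linarith) hM'⟩
end

section
/- Let M > 1/2, m ≥ 2, and let u ∈ L¹_loc(0,∞) be such that ∫₀^∞ u(x) M⁻¹[φ](x) dx is absolutely convergent for every φ ∈ X_{M,m}. If ∫₀^∞ u(x) M⁻¹[φ](x) dx = 0 for every φ ∈ X_{M,m}, then u = 0 almost everywhere in (0,∞). -/
/-!
By the fundamental lemma of the calculus of variations on `(0, ∞)`, it suffices to show
`∫ u g = 0` for every smooth `g` with compact support in `(0, ∞)`. The Mellin transform
`φ = 𝓜 g` of such a `g` is entire, and integrating by parts gives `𝓜 (x g') (s) = -s 𝓜 g (s)`;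
since `x g'` is again such a function, `s ^ k φ(s)` is bounded on every vertical strip for every
`k`, so `φ ∈ X_{M,m}` for all `M, m`. Mellin inversion gives `M⁻¹[φ] = g` on `(0, ∞)`, hence
`∫ u g = ∫ u M⁻¹[φ] = 0`.
-/

open MeasureTheory

open Complex Set Filter Topology Asymptotics
open scoped ContDiff

lemma rpow_le_rpow_add_rpow_of_mem_Icc {x a b t : ℝ} (hx : 0 < x) (ht : t ∈ Icc a b) :
    x ^ t ≤ x ^ a + x ^ b := by
  rcases le_total x 1 with hx1 | hx1
  · exact (Real.rpow_le_rpow_of_exponent_ge hx hx1 ht.1).trans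
      (le_add_of_nonneg_right (Real.rpow_nonneg hx.le _))
  · exact (Real.rpow_le_rpow_of_exponent_le hx1 ht.2).trans
      (le_add_of_nonneg_left (Real.rpow_nonneg hx.le _))

lemma one_add_rpow_mul_le_of_pow_mul_le {r y A B m : ℝ} {k : ℕ} (hr : 0 ≤ r) (hy : 0 ≤ y)
    (hmk : m ≤ k) (hA : y ≤ A) (hB : r ^ k * y ≤ B) :
    (1 + r) ^ m * y ≤ 2 ^ k * (A + B) := by
  have h1r : 1 ≤ 1 + r := le_add_of_nonneg_right hr
  have hpow : (1 + r) ^ m ≤ 2 ^ k * (1 + r ^ k) :=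
    calc (1 + r) ^ m ≤ (1 + r) ^ (k : ℝ) := Real.rpow_le_rpow_of_exponent_le h1r hmk
      _ = (1 + r) ^ k := Real.rpow_natCast _ k
      _ ≤ 2 ^ (k - 1) * (1 ^ k + r ^ k) := add_pow_le zero_le_one hr k
      _ ≤ 2 ^ k * (1 + r ^ k) := by
        rw [one_pow]
        gcongr
        · norm_num
        · omega
  calc (1 + r) ^ m * y ≤ 2 ^ k * (1 + r ^ k) * y := by gcongr
    _ = 2 ^ k * (y + r ^ k * y) := by ring
    _ ≤ 2 ^ k * (A + B) := by gcongr

section Mellin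

variable {E : Type*} [NormedAddCommGroup E] {f : ℝ → E}

lemma eventuallyEq_zero_nhdsGT_zero_of_tsupport_subset (hf : tsupport f ⊆ Ioi 0) :
    f =ᶠ[𝓝[>] 0] 0 :=
  nhdsWithin_le_nhds (notMem_tsupport_iff_eventuallyEq.mp fun h => lt_irrefl (0 : ℝ) (hf h))

lemma HasCompactSupport.eventuallyEq_zero_atTop (hf : HasCompactSupport f) : f =ᶠ[atTop] 0 :=
  atTop_le_cocompact <|
    coclosedCompact_eq_cocompact (X := ℝ) ▸ hasCompactSupport_iff_eventuallyEq.mp hf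

variable [NormedSpace ℂ E]

lemma mellinConvergent_of_tsupport_subset (hf : Continuous f) (hfc : HasCompactSupport f)
    (hf0 : tsupport f ⊆ Ioi 0) (s : ℂ) : MellinConvergent f s :=
  mellinConvergent_of_isBigO_rpow (a := s.re + 1) (b := s.re - 1)
    (hf.locallyIntegrable.locallyIntegrableOn _)
    (hfc.eventuallyEq_zero_atTop.trans_isBigO (isBigO_zero _ _)) (lt_add_one _)
    ((eventuallyEq_zero_nhdsGT_zero_of_tsupport_subset hf0).trans_isBigO (isBigO_zero _ _))
    (sub_one_lt _)

lemma differentiable_mellin_of_tsupport_subset (hf : Continuous f) (hfc : HasCompactSupport f)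
    (hf0 : tsupport f ⊆ Ioi 0) : Differentiable ℂ (mellin f) := fun s =>
  mellin_differentiableAt_of_isBigO_rpow (a := s.re + 1) (b := s.re - 1)
    (hf.locallyIntegrable.locallyIntegrableOn _)
    (hfc.eventuallyEq_zero_atTop.trans_isBigO (isBigO_zero _ _)) (lt_add_one _)
    ((eventuallyEq_zero_nhdsGT_zero_of_tsupport_subset hf0).trans_isBigO (isBigO_zero _ _))
    (sub_one_lt _)

lemma exists_norm_mellin_le {a b : ℝ} (ha : MellinConvergent f a) (hb : MellinConvergent f b) :
    ∃ C > 0, ∀ s : ℂ, s.re ∈ Icc a b → ‖mellin f s‖ ≤ C := by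
  refine ⟨(∫ x in Ioi (0 : ℝ), ‖(x : ℂ) ^ ((a : ℂ) - 1) • f x‖) +
    (∫ x in Ioi (0 : ℝ), ‖(x : ℂ) ^ ((b : ℂ) - 1) • f x‖) + 1, by positivity, fun s hs => ?_⟩
  refine (norm_integral_le_of_norm_le (ha.norm.add hb.norm) ?_).trans ?_
  · filter_upwards [ae_restrict_mem measurableSet_Ioi] with x (hx : 0 < x)
    simp only [Pi.add_apply, norm_smul, norm_cpow_eq_rpow_re_of_pos hx, sub_re, ofReal_re, one_re,
      ← add_mul]
    gcongr
    exact rpow_le_rpow_add_rpow_of_mem_Icc hx ⟨by linarith [hs.1], by linarith [hs.2]⟩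
  · rw [integral_add' ha.norm hb.norm]
    exact le_add_of_nonneg_right zero_le_one

end Mellin

lemma memX.verticalIntegrable {M m σ : ℝ} {φ : ℂ → ℂ} (hφ : memX M m φ) (hm : 1 < m)
    (hσ : |σ| < M) : VerticalIntegrable φ σ := by
  obtain ⟨hφd, C, hC0, hC⟩ := hφ
  have hline : ∀ y : ℝ, |((σ : ℂ) + y * I).re| < M := fun y => by simpa using hσ
  have hcont : Continuous fun y : ℝ => φ (σ + y * I) :=
    hφd.continuousOn.comp_continuous (by fun_prop) hline
  refine ((integrable_one_add_norm (E := ℝ) (r := m) (by simpa using hm)).const_mul C).mono'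
    hcont.aestronglyMeasurable (Eventually.of_forall fun y => (hC _ (hline y)).trans ?_)
  have hy : ‖y‖ ≤ ‖(σ : ℂ) + y * I‖ := by simpa using abs_im_le_norm ((σ : ℂ) + y * I)
  exact mul_le_mul_of_nonneg_left
    (Real.rpow_le_rpow_of_nonpos (by positivity) (by gcongr) (by linarith)) hC0.le

noncomputable def eulerOp (g : ℝ → ℂ) : ℝ → ℂ := fun x => x * deriv g x

structure IsTestFunctionOnIoi (g : ℝ → ℂ) : Prop where
  contDiff : ContDiff ℝ ∞ g
  hasCompactSupport : HasCompactSupport g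
  tsupport_subset : tsupport g ⊆ Ioi 0

namespace IsTestFunctionOnIoi

variable {g : ℝ → ℂ}

lemma ofReal {g : ℝ → ℝ} (hg : ContDiff ℝ ∞ g) (hgc : HasCompactSupport g)
    (hg0 : tsupport g ⊆ Ioi 0) : IsTestFunctionOnIoi fun x => (g x : ℂ) where
  contDiff := ofRealCLM.contDiff.comp hg
  hasCompactSupport := hgc.comp_left ofReal_zero
  tsupport_subset := (tsupport_comp_subset ofReal_zero g).trans hg0

lemma mellinConvergent (hg : IsTestFunctionOnIoi g) (s : ℂ) : MellinConvergent g s :=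
  mellinConvergent_of_tsupport_subset hg.contDiff.continuous hg.hasCompactSupport
    hg.tsupport_subset s

lemma eulerOp (hg : IsTestFunctionOnIoi g) : IsTestFunctionOnIoi (eulerOp g) where
  contDiff := ofRealCLM.contDiff.mul (contDiff_infty_iff_deriv.mp hg.contDiff).2
  hasCompactSupport := hg.hasCompactSupport.deriv.mul_left
  tsupport_subset :=
    tsupport_mul_subset_right.trans (tsupport_deriv_subset.trans hg.tsupport_subset)

lemma iterate_eulerOp (hg : IsTestFunctionOnIoi g) (k : ℕ) :
    IsTestFunctionOnIoi (_root_.eulerOp^[k] g) := by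
  induction k with
  | zero => exact hg
  | succ k ih => rw [Function.iterate_succ_apply']; exact ih.eulerOp

lemma mellin_eulerOp (hg : IsTestFunctionOnIoi g) (s : ℂ) :
    mellin (_root_.eulerOp g) s = -s * mellin g s := by
  have hu : ∀ x ∈ Ioi (0 : ℝ), HasDerivAt (fun x : ℝ => (x : ℂ) ^ s) (s * (x : ℂ) ^ (s - 1)) x :=
    fun x hx => (hasStrictDerivAt_cpow_const (ofReal_mem_slitPlane.mpr hx)).hasDerivAt.comp_ofReal
  have hv : ∀ x ∈ Ioi (0 : ℝ), HasDerivAt g (deriv g x) x := fun x _ =>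
    ((hg.contDiff.differentiable (by simp)) x).hasDerivAt
  have hvanish : ∀ l : Filter ℝ, g =ᶠ[l] 0 → ((fun x : ℝ => (x : ℂ) ^ s) * g) =ᶠ[l] 0 :=
    fun l h => by filter_upwards [h] with x hx; simp [hx]
  have hD : EqOn (fun x : ℝ => (x : ℂ) ^ (s - 1) • _root_.eulerOp g x)
      (fun x : ℝ => (x : ℂ) ^ s * deriv g x) (Ioi 0) := fun x (hx : 0 < x) => by
    have hx0 : (x : ℂ) ≠ 0 := ofReal_ne_zero.mpr hx.ne'
    simp only [_root_.eulerOp, smul_eq_mul, cpow_sub _ _ hx0, cpow_one]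
    field_simp
  have hg' : EqOn (fun x : ℝ => s * ((x : ℂ) ^ (s - 1) • g x))
      (fun x : ℝ => s * (x : ℂ) ^ (s - 1) * g x) (Ioi 0) := fun x _ => by
    simp only [smul_eq_mul, mul_assoc]
  have hparts := integral_Ioi_mul_deriv_eq_deriv_mul (a' := 0) (b' := 0) hu hv
    ((hg.eulerOp.mellinConvergent s).congr_fun hD measurableSet_Ioi)
    (IntegrableOn.congr_fun ((hg.mellinConvergent s).const_mul s) hg' measurableSet_Ioi)
    (tendsto_const_nhds.congr'
      (hvanish _ (eventuallyEq_zero_nhdsGT_zero_of_tsupport_subset hg.tsupport_subset)).symm)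
    (tendsto_const_nhds.congr' (hvanish _ hg.hasCompactSupport.eventuallyEq_zero_atTop).symm)
  calc mellin (_root_.eulerOp g) s = ∫ x in Ioi (0 : ℝ), (x : ℂ) ^ s * deriv g x :=
        setIntegral_congr_fun measurableSet_Ioi hD
    _ = -∫ x in Ioi (0 : ℝ), s * ((x : ℂ) ^ (s - 1) • g x) := by
        rw [hparts, setIntegral_congr_fun measurableSet_Ioi hg', sub_self, zero_sub]
    _ = -s * mellin g s := by rw [integral_const_mul, mellin, neg_mul]

lemma mellin_iterate_eulerOp (hg : IsTestFunctionOnIoi g) (k : ℕ) (s : ℂ) :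
    mellin (_root_.eulerOp^[k] g) s = (-s) ^ k * mellin g s := by
  induction k with
  | zero => simp
  | succ k ih =>
    rw [Function.iterate_succ_apply', (hg.iterate_eulerOp k).mellin_eulerOp, ih, pow_succ]
    ring

lemma memX_mellin (hg : IsTestFunctionOnIoi g) (M m : ℝ) : memX M m (mellin g) := by
  refine ⟨(differentiable_mellin_of_tsupport_subset hg.contDiff.continuous hg.hasCompactSupport
    hg.tsupport_subset).differentiableOn, ?_⟩
  obtain ⟨A, hA0, hA⟩ :=
    exists_norm_mellin_le (hg.mellinConvergent (-M : ℝ)) (hg.mellinConvergent M)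
  obtain ⟨B, hB0, hB⟩ := exists_norm_mellin_le
    ((hg.iterate_eulerOp ⌈m⌉₊).mellinConvergent (-M : ℝ))
    ((hg.iterate_eulerOp ⌈m⌉₊).mellinConvergent M)
  refine ⟨2 ^ ⌈m⌉₊ * (A + B), by positivity, fun z hz => ?_⟩
  have hzM : z.re ∈ Icc (-M) M := ⟨(abs_lt.mp hz).1.le, (abs_lt.mp hz).2.le⟩
  have hpow : ‖z‖ ^ ⌈m⌉₊ * ‖mellin g z‖ ≤ B := by
    simpa [mellin_iterate_eulerOp hg, norm_mul, norm_pow] using hB z hzM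
  rw [Real.rpow_neg (by positivity), ← div_eq_mul_inv, le_div_iff₀ (by positivity), mul_comm]
  exact one_add_rpow_mul_le_of_pow_mul_le (norm_nonneg _) (norm_nonneg _) (Nat.le_ceil m)
    (hA z hzM) hpow

lemma mellinInv_mellin (hg : IsTestFunctionOnIoi g) (σ : ℝ) {x : ℝ} (hx : 0 < x) :
    mellinInv σ (mellin g) x = g x :=
  mellinInv_mellin_eq σ g hx (hg.mellinConvergent σ)
    ((hg.memX_mellin (|σ| + 1) 2).verticalIntegrable one_lt_two (lt_add_one _))
    hg.contDiff.continuous.continuousAt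

end IsTestFunctionOnIoi

lemma mellinInvC_eq_mellinInv (c : ℝ) (φ : ℂ → ℂ) (x : ℝ) :
    mellinInvC c φ x = mellinInv c φ x := by
  rw [mellinInvC, mellinInv, real_smul]
  congr 1
  · push_cast
    ring
  · refine integral_congr_ae (Eventually.of_forall fun y => ?_)
    simp only [smul_eq_mul, neg_add, mul_comm I, sub_eq_add_neg]

theorem mellin_fundamental_lemma_general (M m : ℝ)
    (u : ℝ → ℂ) (hu : LocallyIntegrableOn u (Set.Ioi 0))
    (hzero : ∀ φ : ℂ → ℂ, memX M m φ →
      ∫ x in Set.Ioi (0 : ℝ), u x * mellinInvC (1/2) φ x = 0) :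
    ∀ᵐ x ∂(volume.restrict (Set.Ioi (0 : ℝ))), u x = 0 := by
  rw [ae_restrict_iff' measurableSet_Ioi]
  refine isOpen_Ioi.ae_eq_zero_of_integral_contDiff_smul_eq_zero hu fun g hg hgc hg0 => ?_
  have hgC := IsTestFunctionOnIoi.ofReal hg hgc hg0
  calc ∫ x, g x • u x = ∫ x in Ioi (0 : ℝ), g x • u x :=
        (setIntegral_eq_integral_of_forall_compl_eq_zero fun x hx => by
          rw [image_eq_zero_of_notMem_tsupport fun h => hx (hg0 h), zero_smul]).symm
    _ = ∫ x in Ioi (0 : ℝ), u x * mellinInvC (1/2) (mellin fun x => (g x : ℂ)) x :=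
        setIntegral_congr_fun measurableSet_Ioi fun x hx => by
          rw [mellinInvC_eq_mellinInv, hgC.mellinInv_mellin _ hx, real_smul, mul_comm]
    _ = 0 := hzero _ (hgC.memX_mellin M m)

theorem mellin_fundamental_lemma (M m : ℝ) (hM : 1/2 < M) (hm : 2 ≤ m)
    (u : ℝ → ℂ) (hu : LocallyIntegrableOn u (Set.Ioi 0))
    (hint : ∀ φ : ℂ → ℂ, memX M m φ →
      IntegrableOn (fun x => u x * mellinInvC (1/2) φ x) (Set.Ioi 0))
    (hzero : ∀ φ : ℂ → ℂ, memX M m φ →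
      ∫ x in Set.Ioi (0 : ℝ), u x * mellinInvC (1/2) φ x = 0) :
    ∀ᵐ x ∂(volume.restrict (Set.Ioi (0 : ℝ))), u x = 0 :=
  mellin_fundamental_lemma_general M m u hu hzero
end

section
/- Let M, m > 0 and let F₀ ⊂ S_M be a finite set. For every β ∈ F₀ let k(β) ∈ ℕ ∪ {0} and let A_{β,l} ∈ ℂ be given for every 0 ≤ l ≤ k(β). Then there exists ψ ∈ X_{M,m} such that ψ^{(l)}(β) = A_{β,l} for every β ∈ F₀ and every 0 ≤ l ≤ k(β), where ψ^{(l)} denotes the l-th complex derivative. -/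
open Polynomial
open scoped ContDiff Topology

section Jets

variable {𝕜 𝔸 : Type*} [NontriviallyNormedField 𝕜] [NormedRing 𝔸] [NormedAlgebra 𝕜 𝔸]

theorem iteratedDeriv_fun_mul_eq_zero_of_iteratedDeriv_eq_zero {f g : 𝕜 → 𝔸} {x : 𝕜} {n : ℕ}
    (hf : ContDiffAt 𝕜 n f x) (hg : ContDiffAt 𝕜 n g x)
    (hf₀ : ∀ i ≤ n, iteratedDeriv i f x = 0) {j : ℕ} (hj : j ≤ n) :
    iteratedDeriv j (fun z => f z * g z) x = 0 := by
  have hjn : (j : WithTop ℕ∞) ≤ n := by exact_mod_cast hj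
  rw [iteratedDeriv_fun_mul (hf.of_le hjn) (hg.of_le hjn)]
  refine Finset.sum_eq_zero fun i hi => ?_
  rw [hf₀ i (by grind), mul_zero, zero_mul]

end Jets

namespace Polynomial

variable {𝕜 : Type*} [NontriviallyNormedField 𝕜]

theorem contDiff_eval (p : 𝕜[X]) (n : WithTop ℕ∞) : ContDiff 𝕜 n fun z => p.eval z := by
  simpa using p.contDiff_aeval (𝕜 := 𝕜) n

theorem iteratedDeriv_eval (p : 𝕜[X]) (n : ℕ) :
    iteratedDeriv n (fun z => p.eval z) = fun z => (derivative^[n] p).eval z := by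
  induction n generalizing p with
  | zero => rfl
  | succ n ih =>
    have hderiv : _root_.deriv (fun z => p.eval z) = fun z => p.derivative.eval z := by
      ext z; exact p.deriv
    rw [iteratedDeriv_succ', hderiv, ih, Function.iterate_succ_apply]

variable [CharZero 𝕜]

theorem pow_sub_C_dvd_of_iteratedDeriv_eval_eq_zero {p : 𝕜[X]} {x : 𝕜} {n : ℕ}
    (h : ∀ l ≤ n, iteratedDeriv l (fun z => p.eval z) x = 0) : (X - C x) ^ (n + 1) ∣ p := by
  rcases eq_or_ne p 0 with rfl | hp
  · exact dvd_zero _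
  have hroot : ∀ l ≤ n, (derivative^[l] p).IsRoot x := fun l hl => by
    simpa [iteratedDeriv_eval] using h l hl
  exact (pow_dvd_pow _ (lt_rootMultiplicity_of_isRoot_iterate_derivative hp hroot)).trans
    (pow_rootMultiplicity_dvd p x)

theorem eq_zero_of_iteratedDeriv_eval_eq_zero (F₀ : Finset 𝕜) (k : 𝕜 → ℕ) {p : 𝕜[X]}
    (hdeg : p.degree < ↑(∑ β ∈ F₀, (k β + 1)))
    (h : ∀ β ∈ F₀, ∀ l ≤ k β, iteratedDeriv l (fun z => p.eval z) β = 0) : p = 0 := by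
  have hdvd : ∏ β ∈ F₀, (X - C β) ^ (k β + 1) ∣ p :=
    Finset.prod_dvd_of_coprime
      (fun a _ b _ hab => (pairwise_coprime_X_sub_C Function.injective_id hab).pow)
      fun β hβ => pow_sub_C_dvd_of_iteratedDeriv_eval_eq_zero (h β hβ)
  refine eq_zero_of_dvd_of_degree_lt hdvd (hdeg.trans_le ?_)
  simp [degree_prod, degree_pow, degree_X_sub_C]

end Polynomial

section Interpolation

variable {𝕜 : Type*} [NontriviallyNormedField 𝕜] [CharZero 𝕜]

theorem exists_polynomial_iteratedDeriv_mul_eq {g : 𝕜 → 𝕜} (hg : ContDiff 𝕜 ∞ g)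
    (F₀ : Finset 𝕜) (hg₀ : ∀ β ∈ F₀, g β ≠ 0) (k : 𝕜 → ℕ) (A : 𝕜 → ℕ → 𝕜) :
    ∃ p : 𝕜[X], ∀ β ∈ F₀, ∀ l ≤ k β, iteratedDeriv l (fun z => p.eval z * g z) β = A β l := by
  set D := ∑ β ∈ F₀, (k β + 1)
  let ι := (β : F₀) × Fin (k β + 1)
  have hpg (p : 𝕜[X]) (l : ℕ) (x : 𝕜) : ContDiffAt 𝕜 l (fun z => p.eval z * g z) x :=
    ((p.contDiff_eval l).mul (hg.of_le (by exact_mod_cast le_top))).contDiffAt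
  let T : degreeLT 𝕜 D →ₗ[𝕜] ι → 𝕜 :=
    { toFun p i := iteratedDeriv i.2 (fun z => (p : 𝕜[X]).eval z * g z) i.1
      map_add' p q := by
        ext i
        simp only [Submodule.coe_add, eval_add, add_mul]
        exact iteratedDeriv_fun_add (hpg p _ _) (hpg q _ _)
      map_smul' c p := by
        ext i
        simp only [SetLike.val_smul, eval_smul, smul_eq_mul, mul_assoc]
        exact iteratedDeriv_const_mul_field c _ }
  have hT : Function.Injective T := by
    refine (injective_iff_map_eq_zero T).2 fun p hp => Subtype.ext ?_
    refine eq_zero_of_iteratedDeriv_eval_eq_zero F₀ k (mem_degreeLT.1 p.2) fun β hβ l hl => ?_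
    have hpg₀ : ∀ i ≤ k β, iteratedDeriv i (fun z => (p : 𝕜[X]).eval z * g z) β = 0 :=
      fun i hi => congrFun hp ⟨⟨β, hβ⟩, ⟨i, Nat.lt_succ_of_le hi⟩⟩
    have hdiv : (fun z => (p : 𝕜[X]).eval z) =ᶠ[𝓝 β]
        fun z => (p : 𝕜[X]).eval z * g z * (g z)⁻¹ :=
      (hg.continuous.continuousAt.eventually_ne (hg₀ β hβ)).mono fun z hz => by field_simp
    rw [hdiv.iteratedDeriv_eq]
    exact iteratedDeriv_fun_mul_eq_zero_of_iteratedDeriv_eq_zero (hpg p _ _)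
      ((hg.contDiffAt.inv (hg₀ β hβ)).of_le (by exact_mod_cast le_top)) hpg₀ hl
  have hrank : Module.finrank 𝕜 (degreeLT 𝕜 D) = Module.finrank 𝕜 (ι → 𝕜) := by
    simp only [(degreeLTEquiv 𝕜 D).finrank_eq, Module.finrank_pi,
      ι, Fintype.card_sigma, Fintype.card_fin, D]
    exact (Finset.sum_attach F₀ fun β => k β + 1).symm
  obtain ⟨p, hp⟩ := (LinearMap.injective_iff_surjective_of_finrank_eq_finrank hrank).1 hT
    fun i => A i.1 i.2
  exact ⟨p, fun β hβ l hl => congrFun hp ⟨⟨β, hβ⟩, ⟨l, Nat.lt_succ_of_le hl⟩⟩⟩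

end Interpolation

theorem Polynomial.exists_norm_eval_le {𝕜 : Type*} [NormedField 𝕜] (p : 𝕜[X]) :
    ∃ B > 0, ∀ z : 𝕜, ‖p.eval z‖ ≤ B * (1 + ‖z‖) ^ p.natDegree := by
  refine ⟨∑ i ∈ Finset.range (p.natDegree + 1), ‖p.coeff i‖ + 1, by positivity, fun z => ?_⟩
  have hterm (i : ℕ) (hi : i ∈ Finset.range (p.natDegree + 1)) :
      ‖p.coeff i * z ^ i‖ ≤ ‖p.coeff i‖ * (1 + ‖z‖) ^ p.natDegree := by
    rw [norm_mul, norm_pow]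
    gcongr
    calc ‖z‖ ^ i ≤ (1 + ‖z‖) ^ i := by gcongr; linarith
      _ ≤ (1 + ‖z‖) ^ p.natDegree := by
        gcongr
        · linarith [norm_nonneg z]
        · exact Nat.lt_succ_iff.1 (Finset.mem_range.1 hi)
  calc ‖p.eval z‖ ≤ ∑ i ∈ Finset.range (p.natDegree + 1), ‖p.coeff i * z ^ i‖ := by
        rw [eval_eq_sum_range]; exact norm_sum_le _ _
    _ ≤ (∑ i ∈ Finset.range (p.natDegree + 1), ‖p.coeff i‖) * (1 + ‖z‖) ^ p.natDegree := by
        rw [Finset.sum_mul]; exact Finset.sum_le_sum hterm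
    _ ≤ _ := by gcongr; linarith

theorem Complex.norm_exp_sq_mul_one_add_norm_pow_le {M : ℝ} {z : ℂ} (hz : |z.re| ≤ M) (N : ℕ) :
    ‖Complex.exp (z ^ 2)‖ * (1 + ‖z‖) ^ N ≤ Real.exp (M ^ 2 + N ^ 2 / 4) * (1 + M) ^ N := by
  have hM : 0 ≤ M := (abs_nonneg _).trans hz
  have hnorm : ‖Complex.exp (z ^ 2)‖ = Real.exp (z.re ^ 2 - z.im ^ 2) := by
    rw [Complex.norm_exp, sq, Complex.mul_re]; ring_nf
  have hre : z.re ^ 2 ≤ M ^ 2 := by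
    simpa only [sq_abs] using pow_le_pow_left₀ (abs_nonneg _) hz 2
  have hlin : 1 + ‖z‖ ≤ (1 + M) * Real.exp |z.im| :=
    calc 1 + ‖z‖ ≤ 1 + M + |z.im| := by linarith [z.norm_le_abs_re_add_abs_im]
      _ ≤ (1 + M) * (1 + |z.im|) := by nlinarith [abs_nonneg z.im]
      _ ≤ (1 + M) * Real.exp |z.im| := by gcongr; linarith [Real.add_one_le_exp |z.im|]
  -- completing the square
  have hsq : N * |z.im| - z.im ^ 2 ≤ N ^ 2 / 4 := by
    nlinarith [sq_nonneg (|z.im| - N / 2), sq_abs z.im]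
  calc ‖Complex.exp (z ^ 2)‖ * (1 + ‖z‖) ^ N
      ≤ Real.exp (z.re ^ 2 - z.im ^ 2) * ((1 + M) * Real.exp |z.im|) ^ N := by
        rw [hnorm]; gcongr
    _ = Real.exp (z.re ^ 2 + (N * |z.im| - z.im ^ 2)) * (1 + M) ^ N := by
        rw [mul_pow, ← Real.exp_nat_mul, add_sub_left_comm, Real.exp_add, Real.exp_sub]
        ring
    _ ≤ Real.exp (M ^ 2 + N ^ 2 / 4) * (1 + M) ^ N := by gcongr

theorem Polynomial.exists_norm_eval_mul_exp_sq_le (p : ℂ[X]) (M s : ℝ) :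
    ∃ C > 0, ∀ z : ℂ, |z.re| ≤ M →
      ‖p.eval z * Complex.exp (z ^ 2)‖ ≤ C * (1 + ‖z‖) ^ (-s) := by
  obtain ⟨B, hB, hp⟩ := p.exists_norm_eval_le
  set n := ⌈s⌉₊
  set K := p.natDegree + n
  set C := B * (Real.exp (|M| ^ 2 + K ^ 2 / 4) * (1 + |M|) ^ K)
  refine ⟨C, by positivity, fun z hz => ?_⟩
  have hpow : ‖p.eval z * Complex.exp (z ^ 2)‖ * (1 + ‖z‖) ^ n ≤ C :=
    calc ‖p.eval z * Complex.exp (z ^ 2)‖ * (1 + ‖z‖) ^ n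
        ≤ B * (1 + ‖z‖) ^ p.natDegree * ‖Complex.exp (z ^ 2)‖ * (1 + ‖z‖) ^ n := by
          rw [norm_mul]; gcongr; exact hp z
      _ = B * (‖Complex.exp (z ^ 2)‖ * (1 + ‖z‖) ^ K) := by ring
      _ ≤ C := mul_le_mul_of_nonneg_left
          (Complex.norm_exp_sq_mul_one_add_norm_pow_le (hz.trans (le_abs_self M)) K) hB.le
  calc ‖p.eval z * Complex.exp (z ^ 2)‖ ≤ C * ((1 + ‖z‖) ^ n)⁻¹ := by
        rwa [← div_eq_mul_inv, le_div_iff₀ (by positivity)]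
    _ = C * (1 + ‖z‖) ^ (-(n : ℝ)) := by
        rw [Real.rpow_neg (by positivity), Real.rpow_natCast]
    _ ≤ C * (1 + ‖z‖) ^ (-s) := by
        gcongr
        · exact le_add_of_nonneg_right (norm_nonneg z)
        · exact Nat.le_ceil s

theorem exists_memX_prescribed_derivs_general (M m : ℝ)
    (F₀ : Finset ℂ)
    (k : ℂ → ℕ) (A : ℂ → ℕ → ℂ) :
    ∃ ψ : ℂ → ℂ, memX M m ψ ∧
      ∀ β ∈ F₀, ∀ l ≤ k β, iteratedDeriv l ψ β = A β l := by
  have hexp : Differentiable ℂ fun z : ℂ => Complex.exp (z ^ 2) := by fun_prop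
  obtain ⟨p, hp⟩ := exists_polynomial_iteratedDeriv_mul_eq hexp.contDiff F₀
    (fun β _ => Complex.exp_ne_zero _) k A
  obtain ⟨C, hC, hdecay⟩ := p.exists_norm_eval_mul_exp_sq_le M m
  exact ⟨_, ⟨(p.differentiable.mul hexp).differentiableOn, C, hC, fun z hz => hdecay z hz.le⟩, hp⟩

theorem exists_memX_prescribed_derivs (M m : ℝ) (hM : 0 < M) (hm : 0 < m)
    (F₀ : Finset ℂ) (hF₀ : ∀ β ∈ F₀, |β.re| < M)
    (k : ℂ → ℕ) (A : ℂ → ℕ → ℂ) :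
    ∃ ψ : ℂ → ℂ, memX M m ψ ∧
      ∀ β ∈ F₀, ∀ l ≤ k β, iteratedDeriv l ψ β = A β l :=
  exists_memX_prescribed_derivs_general M m F₀ k A
end

section
/- Let s ∈ (0,1). For every β ∈ ℂ such that β − 2s is not an integer and β is not a negative integer, the following identity of values of the Gamma function holds: [Γ(β+1)/Γ(β−2s+1)] · [sin(π(β−s))/sin(π(β−2s))] − 2 s² 4^s [Γ(s+1/2)/Γ(1−s)] π^{−1/2} (Γ(2s−β) Γ(β+1)/Γ(1+2s))² = [Γ(β+1) sin(πs)/(Γ(β−2s+1) sin(π(β−2s)))] · ( sin(π(β−s))/sin(πs) + Γ(2s−β) Γ(β+1)/Γ(2s) ). -/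
/-!
Write `G = Γ(β+1)`, `r = Γ(2s-β)`. The reflection formula at `w = β - 2s` gives
`Γ(β-2s+1) = -π / (sin(π(β-2s)) r)`, and the duplication and reflection formulas reduce the
constant `2 s² 4^s Γ(s+1/2) / (Γ(1-s) √π Γ(1+2s)²)` to `sin(πs) / (π Γ(2s))`.
Both sides then become `-(G r / π) (sin(π(β-s)) + sin(πs) r G / Γ(2s))`.
-/

open Complex
open scoped Real

namespace Complex

theorem sin_pi_mul_ne_zero {z : ℂ} (hz : ∀ n : ℤ, z ≠ n) : sin (π * z) ≠ 0 := by
  rw [sin_ne_zero_iff]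
  intro k hk
  exact hz k (mul_left_cancel₀ (ofReal_ne_zero.2 Real.pi_ne_zero) (by rw [hk]; ring))

theorem Gamma_neg_ne_zero_of_ne_int {w : ℂ} (hw : ∀ n : ℤ, w ≠ n) : Gamma (-w) ≠ 0 :=
  Gamma_ne_zero fun m hm => hw m (by linear_combination -hm)

theorem Gamma_add_one_eq_neg_pi_div {w : ℂ} (hw : ∀ n : ℤ, w ≠ n) :
    Gamma (w + 1) = -π / (sin (π * w) * Gamma (-w)) := by
  have hrefl := Gamma_mul_Gamma_one_sub (-w)
  rw [sub_neg_eq_add, add_comm 1, mul_neg, sin_neg] at hrefl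
  have hsin := sin_pi_mul_ne_zero hw
  rw [eq_div_iff (mul_ne_zero hsin (Gamma_neg_ne_zero_of_ne_int hw))]
  rw [eq_div_iff (neg_ne_zero.2 hsin)] at hrefl
  linear_combination -hrefl

theorem Gamma_add_half_div_Gamma_one_sub {z : ℂ} (hz : Gamma z ≠ 0) :
    Gamma (z + 1 / 2) / Gamma (1 - z) =
      2 ^ (1 - 2 * z) * √π * Gamma (2 * z) * sin (π * z) / π := by
  have hdup := Gamma_mul_Gamma_add_half z
  have hrefl := Gamma_mul_Gamma_one_sub z
  rcases eq_or_ne (sin (π * z)) 0 with hsin | hsin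
  -- `1 - z` is then a pole, where Mathlib's `Gamma` is `0`, so both sides vanish.
  · rw [hsin, div_zero, mul_eq_zero] at hrefl
    simp [hrefl.resolve_left hz, hsin]
  · have hΓ : Gamma (1 - z) ≠ 0 :=
      right_ne_zero_of_mul (hrefl ▸ div_ne_zero (ofReal_ne_zero.2 Real.pi_ne_zero) hsin)
    rw [eq_div_iff hsin] at hrefl
    rw [div_eq_div_iff hΓ (ofReal_ne_zero.2 Real.pi_ne_zero)]
    refine mul_left_cancel₀ hz ?_
    linear_combination (π : ℂ) * hdup - 2 ^ (1 - 2 * z) * √π * Gamma (2 * z) * hrefl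

theorem ofReal_four_rpow (s : ℝ) : (((4 : ℝ) ^ s : ℝ) : ℂ) = 2 ^ (2 * (s : ℂ)) := by
  rw [show (4 : ℝ) = 2 ^ (2 : ℝ) by norm_num, ← Real.rpow_mul zero_le_two,
    ofReal_cpow zero_le_two]
  push_cast
  ring_nf

end Complex

theorem Real.rpow_neg_one_half {x : ℝ} (hx : 0 ≤ x) : x ^ (-(1 : ℝ) / 2) = (√x)⁻¹ := by
  rw [neg_div, Real.rpow_neg hx, ← Real.sqrt_eq_rpow]

theorem gamma_identity_for_f_general (s : ℝ) (hs : s ∈ Set.Ioo (0:ℝ) 1) (β : ℂ)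
    (h1 : ∀ n : ℤ, β - 2 * s ≠ (n : ℂ)) :
    Complex.Gamma (β + 1) / Complex.Gamma (β - 2 * s + 1) *
        (Complex.sin (Real.pi * (β - s)) / Complex.sin (Real.pi * (β - 2 * s))) -
      2 * (s : ℂ) ^ 2 * ((4 : ℝ) ^ s : ℝ) *
        (Complex.Gamma (s + 1 / 2) / Complex.Gamma (1 - s)) *
        ((Real.pi ^ (-(1 : ℝ) / 2) : ℝ) : ℂ) *
        (Complex.Gamma (2 * s - β) * Complex.Gamma (β + 1) / Complex.Gamma (1 + 2 * s)) ^ 2 =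
    Complex.Gamma (β + 1) * Complex.sin (Real.pi * s) /
        (Complex.Gamma (β - 2 * s + 1) * Complex.sin (Real.pi * (β - 2 * s))) *
      (Complex.sin (Real.pi * (β - s)) / Complex.sin (Real.pi * s) +
        Complex.Gamma (2 * s - β) * Complex.Gamma (β + 1) / Complex.Gamma (2 * s)) := by
  obtain ⟨hs0, hs1⟩ := hs
  have hsC : (s : ℂ) ≠ 0 := ofReal_ne_zero.2 hs0.ne'
  have hΓs : Gamma s ≠ 0 := Gamma_ne_zero_of_re_pos (by simpa using hs0)
  have hsinS : sin (π * s) ≠ 0 := by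
    rw [← ofReal_mul, ← ofReal_sin]
    exact ofReal_ne_zero.2
      (Real.sin_pos_of_pos_of_lt_pi (by positivity) (by nlinarith [Real.pi_pos])).ne'
  have hsinB := sin_pi_mul_ne_zero h1
  have hβ := Gamma_add_one_eq_neg_pi_div h1
  rw [neg_sub] at hβ
  rw [hβ, Gamma_add_half_div_Gamma_one_sub hΓs, add_comm 1 (2 * (s : ℂ)),
    Gamma_add_one _ (mul_ne_zero two_ne_zero hsC), ofReal_four_rpow,
    Real.rpow_neg_one_half Real.pi_pos.le, ofReal_inv, cpow_sub _ _ two_ne_zero, cpow_one]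
  field_simp
  ring

theorem gamma_identity_for_f (s : ℝ) (hs : s ∈ Set.Ioo (0:ℝ) 1) (β : ℂ)
    (h1 : ∀ n : ℤ, β - 2 * s ≠ (n : ℂ))
    (h2 : ∀ n : ℤ, n < 0 → β ≠ (n : ℂ)) :
    Complex.Gamma (β + 1) / Complex.Gamma (β - 2 * s + 1) *
        (Complex.sin (Real.pi * (β - s)) / Complex.sin (Real.pi * (β - 2 * s))) -
      2 * (s : ℂ) ^ 2 * ((4 : ℝ) ^ s : ℝ) *
        (Complex.Gamma (s + 1 / 2) / Complex.Gamma (1 - s)) *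
        ((Real.pi ^ (-(1 : ℝ) / 2) : ℝ) : ℂ) *
        (Complex.Gamma (2 * s - β) * Complex.Gamma (β + 1) / Complex.Gamma (1 + 2 * s)) ^ 2 =
    Complex.Gamma (β + 1) * Complex.sin (Real.pi * s) /
        (Complex.Gamma (β - 2 * s + 1) * Complex.sin (Real.pi * (β - 2 * s))) *
      (Complex.sin (Real.pi * (β - s)) / Complex.sin (Real.pi * s) +
        Complex.Gamma (2 * s - β) * Complex.Gamma (β + 1) / Complex.Gamma (2 * s)) :=
  gamma_identity_for_f_general s hs β h1
end

section
/- Let Ω ⊂ ℂ be a bounded, open, simply connected set whose boundary ∂Ω is of Lipschitz class, and let g be a holomorphic function on a neighborhood of the closure of Ω. Assume there exist constants c₁, c₂ > 0 such that Im(g(z)) ≥ min{0, c₁ − c₂ |Re(g(z))|} for every z ∈ ∂Ω. Then g(z) ≠ 0 for every z ∈ Ω, unless g vanishes identically. -/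
/-!
With `ζ = I * g`, the boundary hypothesis confines `ζ` on `∂Ω` to the region
`Re ζ ≤ max 0 (c₂ |Im ζ| - c₁)`, which meets the sector `|arg ζ| < π / (2β)` only at `0` once `β`
is large. Extending `Re (ζ ^ β)` by zero off that sector gives a continuous function
`sectorRePow β` which, wherever it is positive, is locally the real part of a holomorphic
function. The maximum principle therefore forces `sectorRePow β (I * g) ≤ 0` on `Ω`. But if `g`
vanished somewhere in `Ω` without being constant, by the open mapping theorem `I * g` would take
small positive real values, where `sectorRePow β` is positive.
-/

/-- `Ω ⊂ ℂ` has boundary of Lipschitz class: near every boundary point, in suitable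
orthonormal coordinates (obtained by rotating by a unit complex number `e`), `Ω`
coincides with the region above the graph of a Lipschitz function. -/
def HasLipschitzBoundary (Ω : Set ℂ) : Prop :=
  ∀ z ∈ frontier Ω, ∃ (e : ℂ) (r : ℝ) (L : NNReal) (ψ : ℝ → ℝ),
    ‖e‖ = 1 ∧ 0 < r ∧ LipschitzWith L ψ ∧
    ∀ w ∈ Metric.ball z r, (w ∈ Ω ↔ ψ ((e⁻¹ * (w - z)).re) < (e⁻¹ * (w - z)).im)

open Real Set Filter Topology
open Complex (I arg slitPlane)

theorem le_of_forall_mem_frontier_le_of_isLocalMax {X : Type*} [TopologicalSpace X]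
    [ConnectedSpace X] [NoncompactSpace X] {U : Set X} (hU : IsCompact (closure U))
    {v : X → ℝ} (hv : ContinuousOn v (closure U)) {c : ℝ} (hfr : ∀ z ∈ frontier U, v z ≤ c)
    (hmax : ∀ z ∈ interior U, c < v z → IsLocalMax v z → ∀ᶠ w in 𝓝 z, v w = v z) :
    ∀ z ∈ closure U, v z ≤ c := by
  -- If the maximum of `v` exceeds `c`, the set where it is attained is clopen in `X`, yet it lies
  -- in the compact set `closure U`.
  by_contra! ⟨z₁, hz₁, hcz₁⟩
  obtain ⟨z₀, hz₀, hmax₀⟩ := hU.exists_isMaxOn ⟨z₁, hz₁⟩ hv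
  have hcM : c < v z₀ := hcz₁.trans_le (hmax₀ hz₁)
  set A := closure U ∩ v ⁻¹' {v z₀}
  have hA_interior : A ⊆ interior U := fun a ⟨ha, hva⟩ => by
    by_contra hai
    have := hfr a ⟨ha, hai⟩
    simp only [mem_preimage, mem_singleton_iff] at hva
    linarith
  have hA_closed : IsClosed A :=
    hv.preimage_isClosed_of_isClosed isClosed_closure isClosed_singleton
  have hA_open : IsOpen A := by
    refine isOpen_iff_mem_nhds.2 fun a ha => ?_
    have hU_nhds : interior U ∈ 𝓝 a := isOpen_interior.mem_nhds (hA_interior ha)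
    have hva : v a = v z₀ := ha.2
    have hloc : IsLocalMax v a := by
      filter_upwards [hU_nhds] with w hw
      exact hva ▸ hmax₀ (interior_subset.trans subset_closure hw)
    filter_upwards [hU_nhds, hmax a (hA_interior ha) (hva ▸ hcM) hloc] with w hw hvw
    exact ⟨interior_subset.trans subset_closure hw, hvw.trans hva⟩
  have hA_univ : A = univ := IsClopen.eq_univ ⟨hA_closed, hA_open⟩ ⟨z₀, hz₀, rfl⟩
  exact noncompact_univ X (hU.of_isClosed_subset isClosed_univ
    (hA_univ ▸ inter_subset_left : univ ⊆ closure U))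

theorem Complex.eventually_re_eq_of_isLocalMax_re {E : Type*} [NormedAddCommGroup E]
    [NormedSpace ℂ E] {f : E → ℂ} {z : E} (hf : ∀ᶠ w in 𝓝 z, DifferentiableAt ℂ f w)
    (hmax : IsLocalMax (fun w => (f w).re) z) : ∀ᶠ w in 𝓝 z, (f w).re = (f z).re := by
  have hexp : IsLocalMax (norm ∘ fun w => Complex.exp (f w)) z := by
    filter_upwards [hmax] with w hw
    simpa only [Function.comp_apply, Complex.norm_exp] using Real.exp_le_exp.2 hw
  filter_upwards [Complex.eventually_eq_of_isLocalMax_norm (hf.mono fun w hw => hw.cexp) hexp]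
    with w hw
  simpa only [Complex.norm_exp, Real.exp_eq_exp] using congrArg norm hw

theorem AnalyticOnNhd.exists_eqOn_const_or_mapsTo_interior {E : Type*} [NormedAddCommGroup E]
    [NormedSpace ℂ E] {g : E → ℂ} {Ω : Set E} {S : Set ℂ} (hg : AnalyticOnNhd ℂ g Ω)
    (hΩ : IsPreconnected Ω) (hΩ_open : IsOpen Ω) (hS : MapsTo g Ω S) :
    (∃ w, ∀ z ∈ Ω, g z = w) ∨ MapsTo g Ω (interior S) :=
  (hg.is_constant_or_isOpen hΩ).imp_right fun hopen =>
    mapsTo_iff_image_subset.2 <|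
      interior_maximal (mapsTo_iff_image_subset.1 hS) (hopen Ω subset_rfl hΩ_open)

theorem exists_one_le_and_pi_div_two_mul_le {θ : ℝ} (hθ : 0 < θ) :
    ∃ β : ℝ, 1 ≤ β ∧ π / (2 * β) ≤ θ := by
  refine ⟨max 1 (π / (2 * θ)), le_max_left _ _, ?_⟩
  have hβθ := (div_le_iff₀ (by positivity)).1 (le_max_right 1 (π / (2 * θ)))
  rw [div_le_iff₀ (by positivity)]
  linarith

theorem mul_abs_im_le_re_of_abs_arg_lt {c : ℝ} (hc : 0 < c) {ζ : ℂ}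
    (h : |arg ζ| < arctan (1 / c)) : c * |ζ.im| ≤ ζ.re := by
  have hπ : |arg ζ| < π / 2 := h.trans (arctan_lt_pi_div_two _)
  rcases Complex.abs_arg_lt_pi_div_two_iff.1 hπ with hre | rfl
  · have harg : arctan (ζ.im / ζ.re) = arg ζ := by
      rw [← Complex.tan_arg, arctan_tan (abs_lt.1 hπ).1 (abs_lt.1 hπ).2]
    have hslope : |ζ.im / ζ.re| < 1 / c := by
      obtain ⟨hlo, hhi⟩ := abs_lt.1 h
      rw [← harg, ← arctan_neg] at hlo
      rw [← harg] at hhi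
      exact abs_lt.2 ⟨arctan_lt_arctan_iff.1 hlo, arctan_lt_arctan_iff.1 hhi⟩
    rw [abs_div, abs_of_pos hre, div_lt_div_iff₀ hre hc] at hslope
    linarith
  · simp

/-- `Re (ζ ^ β)` on the sector `|β arg ζ| < π / 2`, where it is positive, extended by `0`;
clamping the angle makes the extension continuous. -/
noncomputable def sectorRePow (β : ℝ) (ζ : ℂ) : ℝ :=
  ‖ζ‖ ^ β * cos (max (-(π / 2)) (min (π / 2) (β * arg ζ)))

section sectorRePow

variable {β : ℝ} {ζ : ℂ}

theorem sectorRePow_nonneg (β : ℝ) (ζ : ℂ) : 0 ≤ sectorRePow β ζ :=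
  mul_nonneg (rpow_nonneg (norm_nonneg ζ) β) <| cos_nonneg_of_mem_Icc
    ⟨le_max_left _ _, max_le (by linarith [pi_pos]) (min_le_left _ _)⟩

theorem sectorRePow_le_norm_rpow (β : ℝ) (ζ : ℂ) : sectorRePow β ζ ≤ ‖ζ‖ ^ β :=
  mul_le_of_le_one_right (rpow_nonneg (norm_nonneg ζ) β) (cos_le_one _)

theorem sectorRePow_zero (hβ : β ≠ 0) : sectorRePow β 0 = 0 := by
  simp [sectorRePow, zero_rpow hβ]

theorem sectorRePow_eq_zero_of_pi_div_two_le_abs (h : π / 2 ≤ |β * arg ζ|) :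
    sectorRePow β ζ = 0 := by
  rcases le_abs'.1 h with h | h
  · rw [sectorRePow, min_eq_right (by linarith [pi_pos]), max_eq_left h, cos_neg,
      cos_pi_div_two, mul_zero]
  · rw [sectorRePow, min_eq_left h, max_eq_right (by linarith [pi_pos]), cos_pi_div_two,
      mul_zero]

theorem abs_mul_arg_lt_of_sectorRePow_pos (h : 0 < sectorRePow β ζ) : |β * arg ζ| < π / 2 := by
  by_contra! hle
  exact h.ne' (sectorRePow_eq_zero_of_pi_div_two_le_abs hle)

theorem sectorRePow_eq_re_cpow_of_pos (h : 0 < sectorRePow β ζ) :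
    sectorRePow β ζ = (ζ ^ (β : ℂ)).re := by
  obtain ⟨hlo, hhi⟩ := abs_lt.1 (abs_mul_arg_lt_of_sectorRePow_pos h)
  rw [Complex.cpow_ofReal_re, sectorRePow, min_eq_right hhi.le, max_eq_right hlo.le, mul_comm β]

theorem sectorRePow_eq_zero_of_re_nonpos (hβ : 1 ≤ β) (h : ζ.re ≤ 0) : sectorRePow β ζ = 0 := by
  rcases eq_or_ne ζ 0 with rfl | hζ
  · exact sectorRePow_zero (by linarith)
  refine sectorRePow_eq_zero_of_pi_div_two_le_abs ?_
  have harg : π / 2 ≤ |arg ζ| := by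
    by_contra! hlt
    rcases Complex.abs_arg_lt_pi_div_two_iff.1 hlt with hre | h0
    · linarith
    · exact hζ h0
  rw [abs_mul, abs_of_pos (by linarith)]
  exact harg.trans (le_mul_of_one_le_left (abs_nonneg _) hβ)

theorem re_pos_of_sectorRePow_pos (hβ : 1 ≤ β) (h : 0 < sectorRePow β ζ) : 0 < ζ.re := by
  by_contra! hre
  exact h.ne' (sectorRePow_eq_zero_of_re_nonpos hβ hre)

theorem sectorRePow_ofReal_pos (β : ℝ) {x : ℝ} (hx : 0 < x) : 0 < sectorRePow β x := by
  rw [sectorRePow, Complex.arg_ofReal_of_nonneg hx.le, mul_zero, min_eq_right (by positivity),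
    max_eq_right (by linarith [pi_pos]), cos_zero, mul_one, Complex.norm_real, norm_of_nonneg hx.le]
  exact rpow_pos_of_pos hx β

theorem continuous_sectorRePow (hβ : 1 ≤ β) : Continuous (sectorRePow β) := by
  have hβ0 : 0 < β := by linarith
  have hnorm : Continuous fun ζ : ℂ => ‖ζ‖ ^ β :=
    continuous_norm.rpow_const fun _ => Or.inr hβ0.le
  refine continuous_iff_continuousAt.2 fun ζ => ?_
  rcases eq_or_ne ζ 0 with rfl | hζ
  · have hlim : Tendsto (fun ζ : ℂ => ‖ζ‖ ^ β) (𝓝 0) (𝓝 0) := by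
      simpa [zero_rpow hβ0.ne'] using hnorm.tendsto 0
    rw [ContinuousAt, sectorRePow_zero hβ0.ne']
    exact squeeze_zero (sectorRePow_nonneg β) (sectorRePow_le_norm_rpow β) hlim
  by_cases hre : ζ.re < 0
  · have hzero : sectorRePow β =ᶠ[𝓝 ζ] fun _ => 0 := by
      filter_upwards [(isOpen_lt Complex.continuous_re continuous_const).mem_nhds hre] with w hw
      exact sectorRePow_eq_zero_of_re_nonpos hβ hw.le
    exact continuousAt_const.congr_of_eventuallyEq hzero
  have hslit : ζ ∈ slitPlane := by
    rcases (not_lt.1 hre).lt_or_eq with hpos | hre0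
    · exact Or.inl hpos
    · exact Or.inr fun him => hζ (Complex.ext hre0.symm him)
  exact hnorm.continuousAt.mul <| continuous_cos.continuousAt.comp <|
    continuousAt_const.max <| continuousAt_const.min <| continuousAt_const.mul <|
      Complex.continuousAt_arg hslit

theorem sectorRePow_eq_zero_of_min_le_neg_re (hβ : 1 ≤ β) {c₁ c₂ : ℝ} (hc₁ : 0 < c₁)
    (hc₂ : 0 < c₂) (hβc₂ : π / (2 * β) ≤ arctan (1 / c₂)) (h : min 0 (c₁ - c₂ * |ζ.im|) ≤ -ζ.re) :
    sectorRePow β ζ = 0 := by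
  rcases le_or_gt ζ.re 0 with hre | hre
  · exact sectorRePow_eq_zero_of_re_nonpos hβ hre
  refine sectorRePow_eq_zero_of_pi_div_two_le_abs ?_
  by_contra! hlt
  rw [abs_mul, abs_of_pos (by linarith)] at hlt
  have harg : |arg ζ| < arctan (1 / c₂) :=
    lt_of_lt_of_le (by rw [lt_div_iff₀ (by linarith)]; linarith) hβc₂
  have hcone := mul_abs_im_le_re_of_abs_arg_lt hc₂ harg
  rcases min_le_iff.1 h with h | h <;> linarith

theorem eventually_sectorRePow_comp_eq_of_isLocalMax {E : Type*} [NormedAddCommGroup E]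
    [NormedSpace ℂ E] {f : E → ℂ} {z : E} (hβ : 1 ≤ β)
    (hf : ∀ᶠ w in 𝓝 z, DifferentiableAt ℂ f w) (hpos : 0 < sectorRePow β (f z))
    (hmax : IsLocalMax (fun w => sectorRePow β (f w)) z) :
    ∀ᶠ w in 𝓝 z, sectorRePow β (f w) = sectorRePow β (f z) := by
  have hcont : ContinuousAt (fun w => sectorRePow β (f w)) z :=
    (continuous_sectorRePow hβ).continuousAt.comp hf.self_of_nhds.continuousAt
  have hpos_near : ∀ᶠ w in 𝓝 z, 0 < sectorRePow β (f w) := hcont.eventually (lt_mem_nhds hpos)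
  have heq : (fun w => sectorRePow β (f w)) =ᶠ[𝓝 z] fun w => (f w ^ (β : ℂ)).re :=
    hpos_near.mono fun w hw => sectorRePow_eq_re_cpow_of_pos hw
  have hdiff : ∀ᶠ w in 𝓝 z, DifferentiableAt ℂ (fun w => f w ^ (β : ℂ)) w :=
    (hf.and hpos_near).mono fun w ⟨hfw, hw⟩ =>
      hfw.cpow_const (Or.inl (re_pos_of_sectorRePow_pos hβ hw))
  filter_upwards [heq, Complex.eventually_re_eq_of_isLocalMax_re hdiff (hmax.congr heq)]
    with w h₁ h₂
  exact h₁.trans (h₂.trans heq.self_of_nhds.symm)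

theorem zero_notMem_interior_setOf_sectorRePow_I_mul_nonpos (β : ℝ) :
    (0 : ℂ) ∉ interior {w : ℂ | sectorRePow β (I * w) ≤ 0} := by
  rw [mem_interior_iff_mem_nhds, Metric.mem_nhds_iff]
  rintro ⟨ε, hε, hball⟩
  have hmem : -((ε / 2 : ℝ) * I) ∈ Metric.ball (0 : ℂ) ε := by
    rw [mem_ball_zero_iff, norm_neg, norm_mul, Complex.norm_I, mul_one, Complex.norm_real,
      norm_of_nonneg (by positivity)]
    linarith
  have hrot : I * -((ε / 2 : ℝ) * I) = (ε / 2 : ℝ) := by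
    linear_combination (-((ε / 2 : ℝ) : ℂ)) * Complex.I_sq
  have hnonpos : sectorRePow β (I * -((ε / 2 : ℝ) * I)) ≤ 0 := hball hmem
  rw [hrot] at hnonpos
  exact hnonpos.not_gt (sectorRePow_ofReal_pos β (by positivity))

end sectorRePow

theorem no_zeros_of_boundary_imaginary_bound_general
    (Ω : Set ℂ) (hΩ_open : IsOpen Ω) (hΩ_bdd : Bornology.IsBounded Ω)
    (hΩ_sc : SimplyConnectedSpace Ω)
    (g : ℂ → ℂ)
    (hg : ∃ U : Set ℂ, IsOpen U ∧ closure Ω ⊆ U ∧ DifferentiableOn ℂ g U)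
    (c₁ c₂ : ℝ) (hc₁ : 0 < c₁) (hc₂ : 0 < c₂)
    (hbd : ∀ z ∈ frontier Ω, min 0 (c₁ - c₂ * |(g z).re|) ≤ (g z).im) :
    (∀ z ∈ Ω, g z = 0) ∨ ∀ z ∈ Ω, g z ≠ 0 := by
  obtain ⟨U, hU_open, hΩU, hg_diff⟩ := hg
  obtain ⟨β, hβ, hβc₂⟩ := exists_one_le_and_pi_div_two_mul_le (arctan_pos.2 (one_div_pos.2 hc₂))
  have hIg_diff : ∀ z ∈ U, DifferentiableAt ℂ (fun w => I * g w) z := fun z hz =>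
    (hg_diff.differentiableAt (hU_open.mem_nhds hz)).const_mul I
  have hv_cont : ContinuousOn (fun z => sectorRePow β (I * g z)) (closure Ω) :=
    (continuous_sectorRePow hβ).comp_continuousOn
      (continuousOn_const.mul (hg_diff.continuousOn.mono hΩU))
  have hv_nonpos : ∀ z ∈ closure Ω, sectorRePow β (I * g z) ≤ 0 := by
    refine le_of_forall_mem_frontier_le_of_isLocalMax hΩ_bdd.isCompact_closure hv_cont
      (fun z hz => ?_) (fun z hz hpos hmax => ?_)
    · refine (sectorRePow_eq_zero_of_min_le_neg_re hβ hc₁ hc₂ hβc₂ ?_).le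
      simpa only [Complex.I_mul_re, Complex.I_mul_im, neg_neg] using hbd z hz
    · have hU_nhds : U ∈ 𝓝 z := hU_open.mem_nhds (hΩU (interior_subset_closure hz))
      exact eventually_sectorRePow_comp_eq_of_isLocalMax hβ (eventually_of_mem hU_nhds hIg_diff)
        hpos hmax
  rcases ((hg_diff.analyticOnNhd hU_open).mono (subset_closure.trans hΩU)
      ).exists_eqOn_const_or_mapsTo_interior (S := {w | sectorRePow β (I * w) ≤ 0})
      (isPreconnected_iff_preconnectedSpace.2 inferInstance) hΩ_open
      (fun z hz => hv_nonpos z (subset_closure hz)) with ⟨w, hw⟩ | hint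
  · rcases eq_or_ne w 0 with rfl | hw0
    · exact Or.inl hw
    · exact Or.inr fun z hz => hw z hz ▸ hw0
  · exact Or.inr fun z hz hz0 =>
      zero_notMem_interior_setOf_sectorRePow_I_mul_nonpos β (hz0 ▸ hint hz)

theorem no_zeros_of_boundary_imaginary_bound
    (Ω : Set ℂ) (hΩ_open : IsOpen Ω) (hΩ_bdd : Bornology.IsBounded Ω)
    (hΩ_sc : SimplyConnectedSpace Ω) (hΩ_lip : HasLipschitzBoundary Ω)
    (g : ℂ → ℂ)
    (hg : ∃ U : Set ℂ, IsOpen U ∧ closure Ω ⊆ U ∧ DifferentiableOn ℂ g U)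
    (c₁ c₂ : ℝ) (hc₁ : 0 < c₁) (hc₂ : 0 < c₂)
    (hbd : ∀ z ∈ frontier Ω, min 0 (c₁ - c₂ * |(g z).re|) ≤ (g z).im) :
    (∀ z ∈ Ω, g z = 0) ∨ ∀ z ∈ Ω, g z ≠ 0 :=
  no_zeros_of_boundary_imaginary_bound_general Ω hΩ_open hΩ_bdd hΩ_sc g hg c₁ c₂ hc₁ hc₂ hbd
end
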